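/- arXiv:2103.02210 — 3 statements merged into one kernel-verified Lean document; each statement's English description precedes it below -/
import Mathlib

section
/- Vertex-to-edge summation by parts: for f ∈ V⁰_{x×y} (a vertex-centered function vanishing at all boundary vertices) and u ∈ E^{ew}_{x×ȳ}, one has ⟨f, A_y u⟩_{vc} = [a_y f, u]_{ew} and ⟨f, D_y u⟩_{vc} + [d_y f, u]_{ew} = 0. -/
open Finset

noncomputable section

/-! Staggered-grid finite-difference operators on a uniform `N_x × N_y` mesh with spacings
`h_x, h_y`.  Grid functions are modelled as `ℤ → ℤ → ℝ`.  For cell-centered functions the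
index `(i,j)` denotes the cell center `(x_i, y_j)`; for east–west edge functions the first
index `i` denotes the edge abscissa `x_{i+1/2}`; for north–south edge functions the second
index `j` denotes the edge ordinate `y_{j+1/2}`; vertex functions use both conventions. -/

/-- Edge-to-center average in `x`: `(a_x w)_{i,j} = (w_{i+1/2,j} + w_{i-1/2,j})/2`. -/
def axOp (w : ℤ → ℤ → ℝ) : ℤ → ℤ → ℝ := fun i j => (w i j + w (i - 1) j) / 2

/-- Edge-to-center difference in `x`: `(d_x w)_{i,j} = (w_{i+1/2,j} − w_{i-1/2,j})/h_x`. -/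
def dxOp (hx : ℝ) (w : ℤ → ℤ → ℝ) : ℤ → ℤ → ℝ := fun i j => (w i j - w (i - 1) j) / hx

/-- Center-to-edge average in `x`: `(A_x φ)_{i+1/2,j} = (φ_{i+1,j} + φ_{i,j})/2`. -/
def AxOp (φ : ℤ → ℤ → ℝ) : ℤ → ℤ → ℝ := fun i j => (φ (i + 1) j + φ i j) / 2

/-- Center-to-edge difference in `x`: `(D_x φ)_{i+1/2,j} = (φ_{i+1,j} − φ_{i,j})/h_x`. -/
def DxOp (hx : ℝ) (φ : ℤ → ℤ → ℝ) : ℤ → ℤ → ℝ := fun i j => (φ (i + 1) j - φ i j) / hx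

/-- Edge-to-center average in `y`. -/
def ayOp (w : ℤ → ℤ → ℝ) : ℤ → ℤ → ℝ := fun i j => (w i j + w i (j - 1)) / 2

/-- Edge-to-center difference in `y`. -/
def dyOp (hy : ℝ) (w : ℤ → ℤ → ℝ) : ℤ → ℤ → ℝ := fun i j => (w i j - w i (j - 1)) / hy

/-- Center-to-edge average in `y`. -/
def AyOp (φ : ℤ → ℤ → ℝ) : ℤ → ℤ → ℝ := fun i j => (φ i (j + 1) + φ i j) / 2

/-- Center-to-edge difference in `y`. -/
def DyOp (hy : ℝ) (φ : ℤ → ℤ → ℝ) : ℤ → ℤ → ℝ := fun i j => (φ i (j + 1) - φ i j) / hy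

/-- The discrete cell-centered inner product
`(φ,ψ)₂ = h_x h_y ∑_{i=1}^{N_x} ∑_{j=1}^{N_y} φ_{i,j} ψ_{i,j}`. -/
def ip2 (Nx Ny : ℕ) (hx hy : ℝ) (f g : ℤ → ℤ → ℝ) : ℝ :=
  hx * hy * ∑ i ∈ Icc (1 : ℤ) (Nx : ℤ), ∑ j ∈ Icc (1 : ℤ) (Ny : ℤ), f i j * g i j

/-- The east–west edge inner product `[u,r]_{ew} = (a_x(u r), 1)₂`. -/
def ipew (Nx Ny : ℕ) (hx hy : ℝ) (f g : ℤ → ℤ → ℝ) : ℝ :=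
  ip2 Nx Ny hx hy (axOp (f * g)) 1

/-- The north–south edge inner product `[v,w]_{ns} = (a_y(v w), 1)₂`. -/
def ipns (Nx Ny : ℕ) (hx hy : ℝ) (f g : ℤ → ℤ → ℝ) : ℝ :=
  ip2 Nx Ny hx hy (ayOp (f * g)) 1

/-- The vertex inner product `⟨f,g⟩_{vc} = (a_x(a_y(f g)), 1)₂`. -/
def ipvc (Nx Ny : ℕ) (hx hy : ℝ) (f g : ℤ → ℤ → ℝ) : ℝ :=
  ip2 Nx Ny hx hy (axOp (ayOp (f * g))) 1

/-!
For each `i` the `j`-sums telescope: by the discrete Leibniz rules in `y`, the integrand of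
`⟨f, A_y u⟩_{vc} − [a_y f, u]_{ew}` is the backward `y`-difference of `a_x(f · (u_{j+1} − u_j))/4`
and that of `⟨f, D_y u⟩_{vc} + [d_y f, u]_{ew}` is `a_x(d_y(f · A_y u))`. Both telescoped
columns vanish because `f` vanishes at `j = 0` and `j = N_y`; the `x`-average plays no role.
-/

def yBackDiff (G : ℤ → ℤ → ℝ) : ℤ → ℤ → ℝ := fun i j => G i j - G i (j - 1)

lemma sum_Icc_sub_pred {M : Type*} [AddCommGroup M] (g : ℤ → M) (N : ℕ) :
    ∑ j ∈ Icc (1 : ℤ) N, (g j - g (j - 1)) = g N - g 0 := by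
  induction N with
  | zero => simp
  | succ n ih =>
    push_cast
    rw [← insert_Icc_right_eq_Icc_add_one (by omega), sum_insert (by simp), ih,
      add_sub_cancel_right]
    abel

lemma dyOp_eq_yBackDiff (hy : ℝ) (G : ℤ → ℤ → ℝ) :
    dyOp hy G = yBackDiff (fun i j => G i j / hy) := by
  ext i j
  simp only [dyOp, yBackDiff, sub_div]

lemma axOp_yBackDiff (G : ℤ → ℤ → ℝ) : axOp (yBackDiff G) = yBackDiff (axOp G) := by
  ext i j
  simp only [axOp, yBackDiff]
  ring

lemma axOp_add (φ ψ : ℤ → ℤ → ℝ) : axOp (φ + ψ) = axOp φ + axOp ψ := by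
  ext i j
  simp only [axOp, Pi.add_apply]
  ring

lemma axOp_sub (φ ψ : ℤ → ℤ → ℝ) : axOp (φ - ψ) = axOp φ - axOp ψ := by
  ext i j
  simp only [axOp, Pi.sub_apply]
  ring

section InnerProduct

variable (Nx Ny : ℕ) (hx hy : ℝ)

lemma ip2_add_left (φ ψ g : ℤ → ℤ → ℝ) :
    ip2 Nx Ny hx hy (φ + ψ) g = ip2 Nx Ny hx hy φ g + ip2 Nx Ny hx hy ψ g := by
  simp only [ip2, Pi.add_apply, add_mul, sum_add_distrib, mul_add]

lemma ip2_sub_left (φ ψ g : ℤ → ℤ → ℝ) :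
    ip2 Nx Ny hx hy (φ - ψ) g = ip2 Nx Ny hx hy φ g - ip2 Nx Ny hx hy ψ g := by
  simp only [ip2, Pi.sub_apply, sub_mul, sum_sub_distrib, mul_sub]

lemma ip2_yBackDiff_one_eq_zero (G : ℤ → ℤ → ℝ)
    (hG0 : ∀ i, G i 0 = 0) (hGN : ∀ i, G i Ny = 0) :
    ip2 Nx Ny hx hy (yBackDiff G) 1 = 0 := by
  simp only [ip2, yBackDiff, Pi.one_apply, mul_one, sum_Icc_sub_pred, hG0, hGN, sub_zero,
    sum_const_zero, mul_zero]

lemma ip2_axOp_yBackDiff_one_eq_zero (G : ℤ → ℤ → ℝ)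
    (hG0 : ∀ i, G i 0 = 0) (hGN : ∀ i, G i Ny = 0) :
    ip2 Nx Ny hx hy (axOp (yBackDiff G)) 1 = 0 := by
  rw [axOp_yBackDiff]
  exact ip2_yBackDiff_one_eq_zero Nx Ny hx hy _ (by simp [axOp, hG0]) (by simp [axOp, hGN])

end InnerProduct

lemma ayOp_mul_AyOp_sub_ayOp_mul (f u : ℤ → ℤ → ℝ) :
    ayOp (f * AyOp u) - ayOp f * u =
      yBackDiff (fun i j => f i j * (u i (j + 1) - u i j) / 4) := by
  ext i j
  simp only [ayOp, AyOp, yBackDiff, Pi.mul_apply, Pi.sub_apply, sub_add_cancel]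
  ring

lemma ayOp_mul_DyOp_add_dyOp_mul (hy : ℝ) (f u : ℤ → ℤ → ℝ) :
    ayOp (f * DyOp hy u) + dyOp hy f * u = dyOp hy (f * AyOp u) := by
  ext i j
  simp only [ayOp, DyOp, dyOp, AyOp, Pi.mul_apply, Pi.add_apply, sub_add_cancel]
  ring

theorem stmt5_general (Nx Ny : ℕ) (hx hy : ℝ)
    (f u : ℤ → ℤ → ℝ)
    (hfS : ∀ i, f i 0 = 0) (hfN : ∀ i, f i (Ny : ℤ) = 0) :
    ipvc Nx Ny hx hy f (AyOp u) = ipew Nx Ny hx hy (ayOp f) u ∧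
      ipvc Nx Ny hx hy f (DyOp hy u) + ipew Nx Ny hx hy (dyOp hy f) u = 0 := by
  constructor
  · rw [← sub_eq_zero]
    have hdiff : ipvc Nx Ny hx hy f (AyOp u) - ipew Nx Ny hx hy (ayOp f) u =
        ip2 Nx Ny hx hy (axOp (ayOp (f * AyOp u) - ayOp f * u)) 1 := by
      rw [axOp_sub, ip2_sub_left]; rfl
    rw [hdiff, ayOp_mul_AyOp_sub_ayOp_mul]
    exact ip2_axOp_yBackDiff_one_eq_zero Nx Ny hx hy _ (by simp [hfS]) (by simp [hfN])
  · have hsum : ipvc Nx Ny hx hy f (DyOp hy u) + ipew Nx Ny hx hy (dyOp hy f) u =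
        ip2 Nx Ny hx hy (axOp (ayOp (f * DyOp hy u) + dyOp hy f * u)) 1 := by
      rw [axOp_add, ip2_add_left]; rfl
    rw [hsum, ayOp_mul_DyOp_add_dyOp_mul, dyOp_eq_yBackDiff]
    exact ip2_axOp_yBackDiff_one_eq_zero Nx Ny hx hy _ (by simp [hfS]) (by simp [hfN])

/-- Vertex-to-edge summation by parts: for a vertex-centered function `f ∈ V⁰_{x×y}`
vanishing at all boundary vertices (vertex `(i,j)` denotes `(x_{i+1/2}, y_{j+1/2})`, so the
boundary vertices are those with `i ∈ {0, N_x}` or `j ∈ {0, N_y}`) and an east–west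
edge-centered function `u`, one has `⟨f, A_y u⟩_{vc} = [a_y f, u]_{ew}` and
`⟨f, D_y u⟩_{vc} + [d_y f, u]_{ew} = 0`. -/
theorem stmt5 (Nx Ny : ℕ) (hx hy : ℝ) (hhx : 0 < hx) (hhy : 0 < hy)
    (f u : ℤ → ℤ → ℝ)
    (hfW : ∀ j, f 0 j = 0) (hfE : ∀ j, f (Nx : ℤ) j = 0)
    (hfS : ∀ i, f i 0 = 0) (hfN : ∀ i, f i (Ny : ℤ) = 0) :
    ipvc Nx Ny hx hy f (AyOp u) = ipew Nx Ny hx hy (ayOp f) u ∧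
      ipvc Nx Ny hx hy f (DyOp hy u) + ipew Nx Ny hx hy (dyOp hy f) u = 0 :=
  stmt5_general Nx Ny hx hy f u hfS hfN
end
end

section
/- Energy dissipation of the Crank-Nicolson Cahn-Hilliard step: suppose (φ⋆ − φⁿ)/(δt/2) = ∇·(M(φ̄)∇μ) and μ = −(γε/2)(Δφ⋆ + Δφⁿ) + (γ/ε)·δf/δ(φ⋆,φⁿ), with homogeneous Neumann boundary conditions ∇μ·n = 0, ∇φ⋆·n = ∇φⁿ·n = 0, M ≥ 0, and the difference quotient satisfying f(φ⋆) − f(φⁿ) = (φ⋆ − φⁿ)·δf/δ(φ⋆,φⁿ) pointwise. Then F(φ⋆) − F(φⁿ) = −(δt/2)‖√(M(φ̄))∇μ‖², where F(φ) = γ∫_Ω [ (ε/2)|∇φ|² + (1/ε)f(φ) ] dx. -/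
open scoped RealInnerProductSpace

/-!
Test the chemical-potential equation with `φ⋆ − φⁿ`: Green's identity turns the Laplacian
term into `(ε/2)(‖∇φ⋆‖² − ‖∇φⁿ‖²)` by `(a + b)(a − b) = a² − b²`, and the discrete chain rule
turns the nonlinear term into `∫ f(φ⋆) − f(φⁿ)`, so `F(φ⋆) − F(φⁿ) = (φ⋆ − φⁿ, μ)`. Testing the
mass equation with `μ` evaluates the same pairing as `−(δt/2)‖√M ∇μ‖²`.
-/

section CahnHilliard

variable {S V : Type*} [NormedAddCommGroup S] [InnerProductSpace ℝ S]
  [NormedAddCommGroup V] [InnerProductSpace ℝ V]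

/-- `intf φ` stands for `∫_Ω f(φ) dx`. -/
noncomputable def ginzburgLandauEnergy (grad : S →ₗ[ℝ] V) (intf : S → ℝ) (γ ε : ℝ) (φ : S) :
    ℝ :=
  γ * ((ε / 2) * ‖grad φ‖ ^ 2 + (1 / ε) * intf φ)

theorem inner_sub_lap_add_lap_of_green {grad : S →ₗ[ℝ] V} {Lap : S → S}
    (hGreen : ∀ ψ χ : S, ⟪Lap ψ, χ⟫ = -⟪grad ψ, grad χ⟫) (φ ψ : S) :
    ⟪φ - ψ, Lap φ + Lap ψ⟫ = -(‖grad φ‖ ^ 2 - ‖grad ψ‖ ^ 2) := by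
  rw [real_inner_comm, inner_add_left, hGreen, hGreen, map_sub, inner_sub_right,
    inner_sub_right, real_inner_self_eq_norm_sq, real_inner_self_eq_norm_sq,
    real_inner_comm (grad ψ)]
  ring

theorem ginzburgLandauEnergy_sub_eq_inner {grad : S →ₗ[ℝ] V} {Lap : S → S} {intf : S → ℝ}
    {γ ε : ℝ} {φstar φn μ dfq : S}
    (hGreen : ∀ ψ χ : S, ⟪Lap ψ, χ⟫ = -⟪grad ψ, grad χ⟫)
    (hchain : intf φstar - intf φn = ⟪φstar - φn, dfq⟫)
    (hμ : μ = -(γ * ε / 2) • (Lap φstar + Lap φn) + (γ / ε) • dfq) :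
    ginzburgLandauEnergy grad intf γ ε φstar - ginzburgLandauEnergy grad intf γ ε φn =
      ⟪φstar - φn, μ⟫ := by
  rw [hμ, inner_add_right, real_inner_smul_right, real_inner_smul_right,
    inner_sub_lap_add_lap_of_green hGreen, ← hchain, ginzburgLandauEnergy,
    ginzburgLandauEnergy]
  ring

theorem inner_eq_of_smul_eq {c : ℝ} (hc : c ≠ 0) {v d μ : S} (h : c • v = d) :
    ⟪v, μ⟫ = c⁻¹ * ⟪d, μ⟫ := by
  rw [← h, real_inner_smul_left, inv_mul_cancel_left₀ hc]

end CahnHilliard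

theorem stmt9_general {S V : Type*} [NormedAddCommGroup S] [InnerProductSpace ℝ S]
    [NormedAddCommGroup V] [InnerProductSpace ℝ V]
    (γ ε δt : ℝ) (hδt : 0 < δt)
    (φstar φn μ dfq divM : S) (sMg : V)
    (grad : S →ₗ[ℝ] V) (Lap : S → S) (intf : S → ℝ)
    (hGreen : ∀ ψ χ : S, ⟪Lap ψ, χ⟫ = -⟪grad ψ, grad χ⟫)
    (hchain : intf φstar - intf φn = ⟪φstar - φn, dfq⟫)
    (hdivM : ⟪divM, μ⟫ = -‖sMg‖ ^ 2)
    (heq1 : (2 / δt) • (φstar - φn) = divM)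
    (heq2 : μ = -(γ * ε / 2) • (Lap φstar + Lap φn) + (γ / ε) • dfq) :
    γ * ((ε / 2) * ‖grad φstar‖ ^ 2 + (1 / ε) * intf φstar)
      - γ * ((ε / 2) * ‖grad φn‖ ^ 2 + (1 / ε) * intf φn)
      = -(δt / 2) * ‖sMg‖ ^ 2 := by
  have hstep : ⟪φstar - φn, μ⟫ = -(δt / 2) * ‖sMg‖ ^ 2 := by
    rw [inner_eq_of_smul_eq (by positivity) heq1, hdivM, inv_div]
    ring
  rw [← hstep]
  exact ginzburgLandauEnergy_sub_eq_inner hGreen hchain heq2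

/-- Energy dissipation of the Crank–Nicolson Cahn–Hilliard step: suppose
`(φ⋆ − φⁿ)/(δt/2) = ∇·(M(φ̄)∇μ)` and
`μ = −(γε/2)(Δφ⋆ + Δφⁿ) + (γ/ε)·δf/δ(φ⋆,φⁿ)`, with homogeneous Neumann boundary
conditions, `M ≥ 0`, and the difference quotient satisfying the exact discrete chain rule.
Then `F(φ⋆) − F(φⁿ) = −(δt/2)‖√(M(φ̄))∇μ‖²`, where
`F(φ) = γ∫_Ω [(ε/2)|∇φ|² + (1/ε)f(φ)] dx`.
Here `S` is the space of scalar fields with the `L²` inner product and `V` the space of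
(gradient) vector fields; `divM` represents `∇·(M(φ̄)∇μ)`; `sMg` represents `√(M(φ̄))∇μ`,
and `hdivM` encodes `(∇·(M(φ̄)∇μ), μ) = −‖√(M(φ̄))∇μ‖²` (integration by parts with
`∇μ·n = 0` and `M ≥ 0`); `hGreen` encodes Green's identity `(Δψ, χ) = −(∇ψ, ∇χ)` valid
under the Neumann boundary conditions; `intf ψ` represents `∫_Ω f(ψ) dx`, `dfq` the
difference-quotient field `δf/δ(φ⋆,φⁿ)`, and `hchain` the integrated discrete chain rule
`∫ f(φ⋆) − f(φⁿ) = ∫ (φ⋆ − φⁿ)·δf/δ(φ⋆,φⁿ)`. -/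
theorem stmt9 {S V : Type*} [NormedAddCommGroup S] [InnerProductSpace ℝ S]
    [NormedAddCommGroup V] [InnerProductSpace ℝ V]
    (γ ε δt : ℝ) (hγ : 0 < γ) (hε : 0 < ε) (hδt : 0 < δt)
    (φstar φn μ dfq divM : S) (sMg : V)
    (grad : S →ₗ[ℝ] V) (Lap : S → S) (intf : S → ℝ)
    (hGreen : ∀ ψ χ : S, ⟪Lap ψ, χ⟫ = -⟪grad ψ, grad χ⟫)
    (hchain : intf φstar - intf φn = ⟪φstar - φn, dfq⟫)
    (hdivM : ⟪divM, μ⟫ = -‖sMg‖ ^ 2)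
    (heq1 : (2 / δt) • (φstar - φn) = divM)
    (heq2 : μ = -(γ * ε / 2) • (Lap φstar + Lap φn) + (γ / ε) • dfq) :
    γ * ((ε / 2) * ‖grad φstar‖ ^ 2 + (1 / ε) * intf φstar)
      - γ * ((ε / 2) * ‖grad φn‖ ^ 2 + (1 / ε) * intf φn)
      = -(δt / 2) * ‖sMg‖ ^ 2 :=
  stmt9_general γ ε δt hδt φstar φn μ dfq divM sMg grad Lap intf hGreen hchain hdivM heq1 heq2
end

section
/- Energy conservation of the decoupled exchange step: suppose ρ(u⋆⋆ − u⋆)/δt = −∇p − φ̄∇μ, μ = −(γε/2)(Δφ⋆⋆ + Δφ⋆) + (γ/ε)·δf/δ(φ⋆⋆,φ⋆), ∇·((u⋆⋆+u⋆)/2) = 0, and (φ⋆⋆ − φ⋆)/δt = −∇·(((u⋆⋆+u⋆)/2)·φ̄), with boundary conditions ∇μ·n = 0, ∇φ⋆⋆·n = ∇φ⋆·n = 0, u⋆⋆ = u⋆ = 0 on ∂Ω, and the exact discrete chain rule f(φ⋆⋆) − f(φ⋆) = (φ⋆⋆−φ⋆)·δf/δ(φ⋆⋆,φ⋆). Then the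 total discrete energy is exactly conserved: E(u⋆⋆) + F(φ⋆⋆) = E(u⋆) + F(φ⋆), where E(u) = (ρ/2)‖u‖² and F(φ) = γ∫_Ω [(ε/2)|∇φ|² + (1/ε)f(φ)] dx. -/
open scoped RealInnerProductSpace

/-!
Test the momentum equation with the midpoint velocity `w = (u⋆⋆ + u⋆)/2`: the kinetic part
becomes `(ρ/2δt)(‖u⋆⋆‖² − ‖u⋆‖²)`, the pressure term vanishes because `w` is divergence
free, and the capillary term `(φ̄∇μ, w) = −(μ, ∇·(wφ̄))` turns, by the transport equation,
into `(μ, φ⋆⋆ − φ⋆)/δt`. Testing the chemical potential with `φ⋆⋆ − φ⋆`, Green's identity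
and the discrete chain rule identify that pairing with the change of free energy, so the two
changes cancel.
-/

section

variable {F : Type*} [NormedAddCommGroup F] [InnerProductSpace ℝ F]

theorem real_inner_sub_add_eq_norm_sq_sub_norm_sq (x y : F) :
    ⟪x - y, x + y⟫ = ‖x‖ ^ 2 - ‖y‖ ^ 2 := by
  rw [inner_sub_left, inner_add_right, inner_add_right, real_inner_self_eq_norm_sq,
    real_inner_self_eq_norm_sq, real_inner_comm y x]
  ring

end

section

variable {S V W : Type*} [NormedAddCommGroup S] [InnerProductSpace ℝ S]
  [NormedAddCommGroup V] [InnerProductSpace ℝ V]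
  [NormedAddCommGroup W] [InnerProductSpace ℝ W]

theorem kinetic_energy_change_eq_neg_inner_chemical_potential
    {ρ δt : ℝ} (hδt : δt ≠ 0) {ustar uss pgm : W} {φstar φss μ p : S}
    {gradW : S → W} {divW : W → S} {T : W → S}
    (hibp : ∀ (q : S) (w : W), ⟪gradW q, w⟫ = -⟪q, divW w⟫)
    (hT : ∀ w : W, ⟪pgm, w⟫ = -⟪μ, T w⟫)
    (hmomentum : (ρ / δt) • (uss - ustar) = -gradW p - pgm)
    (hdiv : divW ((1 / 2 : ℝ) • (uss + ustar)) = 0)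
    (htransport : (1 / δt) • (φss - φstar) = -T ((1 / 2 : ℝ) • (uss + ustar))) :
    (ρ / 2) * (‖uss‖ ^ 2 - ‖ustar‖ ^ 2) = -⟪φss - φstar, μ⟫ := by
  set w : W := (1 / 2 : ℝ) • (uss + ustar)
  have hkinetic :
      ⟪(ρ / δt) • (uss - ustar), w⟫ = ρ / δt * (1 / 2) * (‖uss‖ ^ 2 - ‖ustar‖ ^ 2) := by
    rw [real_inner_smul_left, real_inner_smul_right, real_inner_sub_add_eq_norm_sq_sub_norm_sq]
    ring
  have hpressure : ⟪gradW p, w⟫ = 0 := by rw [hibp, hdiv, inner_zero_right, neg_zero]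
  have hcapillary : ⟪pgm, w⟫ = 1 / δt * ⟪φss - φstar, μ⟫ := by
    have hTw : T w = -((1 / δt) • (φss - φstar)) := by rw [htransport, neg_neg]
    rw [hT, hTw, inner_neg_right, neg_neg, real_inner_smul_right, real_inner_comm]
  have htested := congrArg (⟪·, w⟫) hmomentum
  rw [hkinetic, inner_sub_left, inner_neg_left, hpressure, hcapillary, neg_zero,
    zero_sub] at htested
  calc (ρ / 2) * (‖uss‖ ^ 2 - ‖ustar‖ ^ 2)
      = δt * (ρ / δt * (1 / 2) * (‖uss‖ ^ 2 - ‖ustar‖ ^ 2)) := by field_simp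
    _ = -⟪φss - φstar, μ⟫ := by rw [htested]; field_simp

theorem inner_sub_lap_add_lap {grad : S →ₗ[ℝ] V} {Lap : S → S}
    (hGreen : ∀ ψ χ : S, ⟪Lap ψ, χ⟫ = -⟪grad ψ, grad χ⟫) (ψ χ : S) :
    ⟪ψ - χ, Lap ψ + Lap χ⟫ = -(‖grad ψ‖ ^ 2 - ‖grad χ‖ ^ 2) := by
  rw [real_inner_comm, inner_add_left, hGreen, hGreen, map_sub, ← neg_add, ← inner_add_left,
    real_inner_comm, real_inner_sub_add_eq_norm_sq_sub_norm_sq]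

noncomputable def freeEnergy (γ ε : ℝ) (grad : S →ₗ[ℝ] V) (intf : S → ℝ) (φ : S) : ℝ :=
  γ * ((ε / 2) * ‖grad φ‖ ^ 2 + (1 / ε) * intf φ)

theorem inner_sub_chemical_potential_eq_freeEnergy_sub {γ ε : ℝ} {φstar φss μ dfq : S}
    {grad : S →ₗ[ℝ] V} {Lap : S → S} {intf : S → ℝ}
    (hGreen : ∀ ψ χ : S, ⟪Lap ψ, χ⟫ = -⟪grad ψ, grad χ⟫)
    (hchain : intf φss - intf φstar = ⟪φss - φstar, dfq⟫)
    (hμ : μ = -(γ * ε / 2) • (Lap φss + Lap φstar) + (γ / ε) • dfq) :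
    ⟪φss - φstar, μ⟫ = freeEnergy γ ε grad intf φss - freeEnergy γ ε grad intf φstar := by
  rw [hμ, inner_add_right, real_inner_smul_right, real_inner_smul_right,
    inner_sub_lap_add_lap hGreen, ← hchain, freeEnergy, freeEnergy]
  ring

end

theorem stmt10_general {S V W : Type*} [NormedAddCommGroup S] [InnerProductSpace ℝ S]
    [NormedAddCommGroup V] [InnerProductSpace ℝ V]
    [NormedAddCommGroup W] [InnerProductSpace ℝ W]
    (ρ γ ε δt : ℝ) (hδt : 0 < δt)
    (ustar uss : W) (φstar φss μ p dfq : S) (pgm : W)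
    (grad : S →ₗ[ℝ] V) (gradW : S → W) (divW : W → S) (T : W → S)
    (Lap : S → S) (intf : S → ℝ)
    (hibp : ∀ (q : S) (w : W), ⟪gradW q, w⟫ = -⟪q, divW w⟫)
    (hT : ∀ w : W, ⟪pgm, w⟫ = -⟪μ, T w⟫)
    (hGreen : ∀ ψ χ : S, ⟪Lap ψ, χ⟫ = -⟪grad ψ, grad χ⟫)
    (hchain : intf φss - intf φstar = ⟪φss - φstar, dfq⟫)
    (heq1 : (ρ / δt) • (uss - ustar) = -gradW p - pgm)
    (heq2 : μ = -(γ * ε / 2) • (Lap φss + Lap φstar) + (γ / ε) • dfq)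
    (heq3 : divW ((1 / 2 : ℝ) • (uss + ustar)) = 0)
    (heq4 : (1 / δt) • (φss - φstar) = -T ((1 / 2 : ℝ) • (uss + ustar))) :
    (ρ / 2) * ‖uss‖ ^ 2 + γ * ((ε / 2) * ‖grad φss‖ ^ 2 + (1 / ε) * intf φss)
      = (ρ / 2) * ‖ustar‖ ^ 2
        + γ * ((ε / 2) * ‖grad φstar‖ ^ 2 + (1 / ε) * intf φstar) := by
  have hkinetic := kinetic_energy_change_eq_neg_inner_chemical_potential hδt.ne' hibp hT heq1
    heq3 heq4
  have hfree := inner_sub_chemical_potential_eq_freeEnergy_sub hGreen hchain heq2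
  change (ρ / 2) * ‖uss‖ ^ 2 + freeEnergy γ ε grad intf φss
    = (ρ / 2) * ‖ustar‖ ^ 2 + freeEnergy γ ε grad intf φstar
  linear_combination hkinetic - hfree

/-- Energy conservation of the decoupled exchange step: suppose
`ρ(u⋆⋆ − u⋆)/δt = −∇p − φ̄∇μ`,
`μ = −(γε/2)(Δφ⋆⋆ + Δφ⋆) + (γ/ε)·δf/δ(φ⋆⋆,φ⋆)`,
`∇·((u⋆⋆+u⋆)/2) = 0`, and `(φ⋆⋆ − φ⋆)/δt = −∇·(((u⋆⋆+u⋆)/2)·φ̄)`, with the natural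
boundary conditions and the exact discrete chain rule.  Then the total discrete energy is
exactly conserved: `E(u⋆⋆) + F(φ⋆⋆) = E(u⋆) + F(φ⋆)`, where `E(u) = (ρ/2)‖u‖²` and
`F(φ) = γ∫_Ω [(ε/2)|∇φ|² + (1/ε)f(φ)] dx`.
Here `W` is the space of (`H¹₀`) velocity fields with the `L²` inner product, `S` the
space of scalar fields, and `V` the space where scalar gradients live; `pgm` represents
`φ̄∇μ`; `T w` represents `∇·(w φ̄)`; `hT` encodes integration by parts
`(φ̄∇μ, w) = −(μ, ∇·(w φ̄))` for `w` vanishing on `∂Ω`; `hibp` encodes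
`(∇q, w) = −(q, ∇·w)`; `hGreen` encodes Green's identity under the Neumann conditions;
`intf ψ` represents `∫_Ω f(ψ) dx` and `hchain` the integrated exact chain rule. -/
theorem stmt10 {S V W : Type*} [NormedAddCommGroup S] [InnerProductSpace ℝ S]
    [NormedAddCommGroup V] [InnerProductSpace ℝ V]
    [NormedAddCommGroup W] [InnerProductSpace ℝ W]
    (ρ γ ε δt : ℝ) (hρ : 0 < ρ) (hγ : 0 < γ) (hε : 0 < ε) (hδt : 0 < δt)
    (ustar uss : W) (φstar φss μ p dfq : S) (pgm : W)
    (grad : S →ₗ[ℝ] V) (gradW : S → W) (divW : W → S) (T : W → S)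
    (Lap : S → S) (intf : S → ℝ)
    (hibp : ∀ (q : S) (w : W), ⟪gradW q, w⟫ = -⟪q, divW w⟫)
    (hT : ∀ w : W, ⟪pgm, w⟫ = -⟪μ, T w⟫)
    (hGreen : ∀ ψ χ : S, ⟪Lap ψ, χ⟫ = -⟪grad ψ, grad χ⟫)
    (hchain : intf φss - intf φstar = ⟪φss - φstar, dfq⟫)
    (heq1 : (ρ / δt) • (uss - ustar) = -gradW p - pgm)
    (heq2 : μ = -(γ * ε / 2) • (Lap φss + Lap φstar) + (γ / ε) • dfq)
    (heq3 : divW ((1 / 2 : ℝ) • (uss + ustar)) = 0)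
    (heq4 : (1 / δt) • (φss - φstar) = -T ((1 / 2 : ℝ) • (uss + ustar))) :
    (ρ / 2) * ‖uss‖ ^ 2 + γ * ((ε / 2) * ‖grad φss‖ ^ 2 + (1 / ε) * intf φss)
      = (ρ / 2) * ‖ustar‖ ^ 2
        + γ * ((ε / 2) * ‖grad φstar‖ ^ 2 + (1 / ε) * intf φstar) :=
  stmt10_general ρ γ ε δt hδt ustar uss φstar φss μ p dfq pgm grad gradW divW T Lap intf hibp hT
    hGreen hchain heq1 heq2 heq3 heq4
end
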